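/- Let 1 < p < 5, α > 0, β > 0, γ, μ, s ≥ 0, and let {uₙ} = {(u_{1,n}, u_{2,n}, u_{3,n})} be a minimizing sequence for I(γ, μ, s). Then: (i) there exists B > 0 such that Σ_{i=1}^{3} ‖∂ₓu_{i,n}‖²_{L²} ≤ B for all sufficiently large n; (ii) if γ > 0, there exists δ₁ > 0 such that ‖∂ₓu_{1,n}‖_{L²} ≥ δ₁ for all sufficiently large n; (iii) if μ > 0, there exists δ₂ > 0 such that ‖∂ₓu_{2,n}‖_{L²} ≥ δ₂ for all sufficiently large n; (iv) if s > 0, there exists δ₃ > 0 such that ‖∂ₓu_{3,n}‖_{L²} ≥ δ₃ for all sufficiently large n. -/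

import Mathlib

open MeasureTheory Filter Complex

noncomputable section

/-- Membership in `H¹(ℝ, ℂ)` (modeled via the classical derivative). -/
def InH1 (f : ℝ → ℂ) : Prop :=
  MemLp f 2 (volume : Measure ℝ) ∧ Differentiable ℝ f ∧
    MemLp (deriv f) 2 (volume : Measure ℝ)

/-- `‖f‖_{L²}²`. -/
def massSq (f : ℝ → ℂ) : ℝ := ∫ x : ℝ, ‖f x‖ ^ 2

/-- `‖∂ₓ f‖_{L²}²`. -/
def kinetic (f : ℝ → ℂ) : ℝ := ∫ x : ℝ, ‖deriv f x‖ ^ 2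

/-- `∫ |f|^{p+1}`. -/
def potential (p : ℝ) (f : ℝ → ℂ) : ℝ := ∫ x : ℝ, ‖f x‖ ^ (p + 1)

/-- `Re ∫ u₁ u₂ (conj u₃)`. -/
def interaction (u1 u2 u3 : ℝ → ℂ) : ℝ :=
  ∫ x : ℝ, (u1 x * u2 x * (starRingEnd ℂ) (u3 x)).re

/-- The energy functional `E`. -/
def energy (p α β : ℝ) (u1 u2 u3 : ℝ → ℂ) : ℝ :=
  ((1 / 2) * kinetic u1 - β / (p + 1) * potential p u1)
    + ((1 / 2) * kinetic u2 - β / (p + 1) * potential p u2)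
    + ((1 / 2) * kinetic u3 - β / (p + 1) * potential p u3)
    - α * interaction u1 u2 u3

/-- The set of energies of admissible triples for `I(γ, μ, s)`. -/
def constraintSet (p α β γ μ s : ℝ) : Set ℝ :=
  { e | ∃ u1 u2 u3 : ℝ → ℂ, InH1 u1 ∧ InH1 u2 ∧ InH1 u3 ∧
      massSq u1 = γ ∧ massSq u2 = μ ∧ massSq u3 = s ∧ e = energy p α β u1 u2 u3 }

/-- `I(γ, μ, s)`. -/
def Iinf (p α β γ μ s : ℝ) : ℝ := sInf (constraintSet p α β γ μ s)

/-- A minimizing sequence for `I(γ, μ, s)`. -/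
def MinimizingSeq (p α β γ μ s : ℝ) (u1 u2 u3 : ℕ → ℝ → ℂ) : Prop :=
  (∀ n, InH1 (u1 n) ∧ InH1 (u2 n) ∧ InH1 (u3 n)) ∧
  Tendsto (fun n => massSq (u1 n)) atTop (nhds γ) ∧
  Tendsto (fun n => massSq (u2 n)) atTop (nhds μ) ∧
  Tendsto (fun n => massSq (u3 n)) atTop (nhds s) ∧
  Tendsto (fun n => energy p α β (u1 n) (u2 n) (u3 n)) atTop
    (nhds (Iinf p α β γ μ s))

/-- `∫_{y-r}^{y+r} (|u₁|² + |u₂|² + |u₃|²)`. -/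
def localMass (u1 u2 u3 : ℝ → ℂ) (y r : ℝ) : ℝ :=
  ∫ x in Set.Icc (y - r) (y + r), (‖u1 x‖ ^ 2 + ‖u2 x‖ ^ 2 + ‖u3 x‖ ^ 2)

/-- `λ` is the concentration parameter of the sequence. -/
def IsConcentration (u1 u2 u3 : ℕ → ℝ → ℂ) (lam : ℝ) : Prop :=
  Tendsto (fun r : ℝ =>
      limsup (fun n => ⨆ y : ℝ, localMass (u1 n) (u2 n) (u3 n) y r) atTop)
    atTop (nhds lam)

/-- The squared `H¹` norm. -/
def H1normSq (f : ℝ → ℂ) : ℝ := massSq f + kinetic f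

/-- The `H¹(ℝ; ℂ³)` distance between two triples. -/
def H1dist3 (u v : (ℝ → ℂ) × (ℝ → ℂ) × (ℝ → ℂ)) : ℝ :=
  Real.sqrt (H1normSq (u.1 - v.1) + H1normSq (u.2.1 - v.2.1)
    + H1normSq (u.2.2 - v.2.2))

/-- The set `𝒢_{γ,μ,s}` of minimizers of `I(γ, μ, s)`. -/
def GSet (p α β γ μ s : ℝ) : Set ((ℝ → ℂ) × (ℝ → ℂ) × (ℝ → ℂ)) :=
  { u | InH1 u.1 ∧ InH1 u.2.1 ∧ InH1 u.2.2 ∧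
      massSq u.1 = γ ∧ massSq u.2.1 = μ ∧ massSq u.2.2 = s ∧
      energy p α β u.1 u.2.1 u.2.2 = Iinf p α β γ μ s }

/-- Symmetric decreasing rearrangement of a real function:
`f*(x) = |{t > 0 : x ∈ I_t}|` where `I_t` is the open interval centered at `0`
of length `|{ z : |f z| > t }|`. -/
def symmRearr (f : ℝ → ℝ) (x : ℝ) : ℝ :=
  (volume { t : ℝ | 0 < t ∧
      ENNReal.ofReal (2 * |x|) < volume { z : ℝ | t < |f z| } }).toReal

/-- The constraint set for `J(γ, μ)` (with `Q₁(u) = γ`, `Q₂(u) = μ`). -/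
def JconstraintSet (p α β γ μ : ℝ) : Set ℝ :=
  { e | ∃ u1 u2 u3 : ℝ → ℂ, InH1 u1 ∧ InH1 u2 ∧ InH1 u3 ∧
      massSq u1 + massSq u3 = γ ∧ massSq u2 + massSq u3 = μ ∧
      e = energy p α β u1 u2 u3 }

/-- `J(γ, μ)`. -/
def Jinf (p α β γ μ : ℝ) : ℝ := sInf (JconstraintSet p α β γ μ)

/-- A minimizing sequence for `J(γ, μ)`. -/
def JMinimizingSeq (p α β γ μ : ℝ) (u1 u2 u3 : ℕ → ℝ → ℂ) : Prop :=
  (∀ n, InH1 (u1 n) ∧ InH1 (u2 n) ∧ InH1 (u3 n)) ∧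
  Tendsto (fun n => massSq (u1 n) + massSq (u3 n)) atTop (nhds γ) ∧
  Tendsto (fun n => massSq (u2 n) + massSq (u3 n)) atTop (nhds μ) ∧
  Tendsto (fun n => energy p α β (u1 n) (u2 n) (u3 n)) atTop
    (nhds (Jinf p α β γ μ))

/-- The set `ℳ_{γ,μ}` of minimizers of `J(γ, μ)`. -/
def MSet (p α β γ μ : ℝ) : Set ((ℝ → ℂ) × (ℝ → ℂ) × (ℝ → ℂ)) :=
  { u | InH1 u.1 ∧ InH1 u.2.1 ∧ InH1 u.2.2 ∧
      massSq u.1 + massSq u.2.2 = γ ∧ massSq u.2.1 + massSq u.2.2 = μ ∧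
      energy p α β u.1 u.2.1 u.2.2 = Jinf p α β γ μ }

end

/-!
The one-dimensional Gagliardo–Nirenberg inequality `‖f‖_∞⁴ ≤ 4 ‖f‖₂² ‖f'‖₂²` bounds the
potential term of a component by `C ‖f'‖₂^((p-1)/2)` and the coupling term by `C ‖f'‖₂^(1/2)`.
For `p < 5` both are sublinear in the kinetic energy, so the energy is coercive and the kinetic
energy of a minimizing sequence stays bounded.

If the kinetic energy of a component of positive mass vanished along a subsequence, so would its
potential energy and its coupling with the other two components, and the energy of the sequence
would be asymptotically that of the two other components alone (rescaled to their exact masses).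
Putting back, far away from them, a dilated Gaussian of the right mass and negative energy
lowers that energy by a fixed amount while creating a negligible coupling, which contradicts
minimality.
-/

open Topology

section CauchySchwarz

variable {α E : Type*} [MeasurableSpace α] {μ : Measure α} [NormedAddCommGroup E]
  {f g : α → E}

theorem integrable_norm_mul_norm (hf : MemLp f 2 μ) (hg : MemLp g 2 μ) :
    Integrable (fun a => ‖f a‖ * ‖g a‖) μ :=
  hf.norm.integrable_mul hg.norm

theorem integral_norm_mul_norm_le (hf : MemLp f 2 μ) (hg : MemLp g 2 μ) :
    ∫ a, ‖f a‖ * ‖g a‖ ∂μ ≤ √(∫ a, ‖f a‖ ^ 2 ∂μ) * √(∫ a, ‖g a‖ ^ 2 ∂μ) := by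
  have h := integral_mul_norm_le_Lp_mul_Lq (μ := μ) Real.HolderConjugate.two_two
    (by simpa using hf) (by simpa using hg)
  simpa only [Real.rpow_two, Real.sqrt_eq_rpow, one_div] using h

end CauchySchwarz

theorem exists_le_of_integrable {α : Type*} [MeasurableSpace α] {μ : Measure α}
    (hμ : μ Set.univ = ⊤) {g : α → ℝ} (hg : Integrable g μ) {ε : ℝ} (hε : 0 < ε) :
    ∃ y, g y ≤ ε := by
  by_contra! h
  have hc : Integrable (fun _ => ε) μ :=
    hg.mono' aestronglyMeasurable_const
      (ae_of_all _ fun y => by rw [Real.norm_of_nonneg hε.le]; exact (h y).le)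
  rcases integrable_const_iff.1 hc with h0 | hfin
  · exact hε.ne' h0
  · exact (measure_ne_top μ Set.univ) hμ

theorem massSq_nonneg (f : ℝ → ℂ) : 0 ≤ massSq f := integral_nonneg fun _ => by positivity

theorem kinetic_nonneg (f : ℝ → ℂ) : 0 ≤ kinetic f := integral_nonneg fun _ => by positivity

theorem potential_nonneg (p : ℝ) (f : ℝ → ℂ) : 0 ≤ potential p f :=
  integral_nonneg fun _ => by positivity

namespace InH1

variable {f : ℝ → ℂ}

theorem integrable_norm_sq (hf : InH1 f) : Integrable (fun x => ‖f x‖ ^ 2) :=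
  (memLp_two_iff_integrable_sq_norm hf.1.1).1 hf.1

theorem norm_sq_le_add (hf : InH1 f) (x y : ℝ) :
    ‖f x‖ ^ 2 ≤ ‖f y‖ ^ 2 + 2 * ∫ t, ‖f t‖ * ‖deriv f t‖ := by
  have hderiv : ∀ t, HasDerivAt (‖f ·‖ ^ 2) (2 * inner ℝ (f t) (deriv f t)) t :=
    fun t => (hf.2.1 t).hasDerivAt.norm_sq
  have hbound : ∀ t, ‖2 * inner ℝ (f t) (deriv f t)‖ ≤ 2 * (‖f t‖ * ‖deriv f t‖) := fun t => by
    rw [norm_mul, Real.norm_two]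
    exact mul_le_mul_of_nonneg_left (norm_inner_le_norm _ _) zero_le_two
  have hint : Integrable (fun t => 2 * (‖f t‖ * ‖deriv f t‖)) :=
    (integrable_norm_mul_norm hf.1 hf.2.2).const_mul 2
  have hint' : Integrable (fun t => 2 * inner ℝ (f t) (deriv f t)) :=
    hint.mono' ((hf.2.1.continuous.measurable.inner (measurable_deriv f)).const_mul
      2).aestronglyMeasurable (ae_of_all _ hbound)
  have hftc := intervalIntegral.integral_eq_sub_of_hasDerivAt (fun t _ => hderiv t)
    (hint'.intervalIntegrable (a := y) (b := x))
  calc ‖f x‖ ^ 2 = ‖f y‖ ^ 2 + ∫ t in y..x, 2 * inner ℝ (f t) (deriv f t) := by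
        rw [hftc]; ring
    _ ≤ ‖f y‖ ^ 2 + ∫ t in Set.uIoc y x, 2 * (‖f t‖ * ‖deriv f t‖) := by
        have h := intervalIntegral.norm_integral_le_integral_norm_uIoc
          (f := fun t => 2 * inner ℝ (f t) (deriv f t)) (a := y) (b := x) (μ := volume)
        rw [Real.norm_eq_abs] at h
        linarith [le_abs_self (∫ t in y..x, 2 * inner ℝ (f t) (deriv f t)),
          setIntegral_mono (s := Set.uIoc y x) hint'.norm.integrableOn hint.integrableOn hbound]
    _ ≤ ‖f y‖ ^ 2 + 2 * ∫ t, ‖f t‖ * ‖deriv f t‖ := by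
        rw [← integral_const_mul]
        linarith [setIntegral_le_integral (s := Set.uIoc y x) hint
          (ae_of_all _ fun t => by positivity)]

theorem norm_pow_four_le (hf : InH1 f) (x : ℝ) :
    ‖f x‖ ^ 4 ≤ 4 * massSq f * kinetic f := by
  have hsq : ‖f x‖ ^ 2 ≤ 2 * (√(massSq f) * √(kinetic f)) := by
    refine le_of_forall_pos_le_add fun ε hε => ?_
    obtain ⟨y, hy⟩ := exists_le_of_integrable Real.volume_univ hf.integrable_norm_sq hε
    have := integral_norm_mul_norm_le hf.1 hf.2.2
    unfold massSq kinetic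
    linarith [hf.norm_sq_le_add x y]
  calc ‖f x‖ ^ 4 = (‖f x‖ ^ 2) ^ 2 := by ring
    _ ≤ (2 * (√(massSq f) * √(kinetic f))) ^ 2 := by gcongr
    _ = 4 * massSq f * kinetic f := by
        rw [mul_pow, mul_pow, Real.sq_sqrt (massSq_nonneg f), Real.sq_sqrt (kinetic_nonneg f)]
        ring

theorem norm_le (hf : InH1 f) (x : ℝ) :
    ‖f x‖ ≤ (4 * massSq f * kinetic f) ^ (1 / 4 : ℝ) := by
  calc ‖f x‖ = (‖f x‖ ^ 4) ^ (1 / 4 : ℝ) := by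
        rw [← Real.rpow_natCast, ← Real.rpow_mul (norm_nonneg _)]; norm_num
    _ ≤ _ := by gcongr; exact hf.norm_pow_four_le x

theorem norm_le_of_le (hf : InH1 f) {M K : ℝ} (hM : massSq f ≤ M) (hK : kinetic f ≤ K)
    (x : ℝ) : ‖f x‖ ≤ (4 * M * K) ^ (1 / 4 : ℝ) := by
  have hm := massSq_nonneg f
  have hk := kinetic_nonneg f
  refine (hf.norm_le x).trans (Real.rpow_le_rpow (by positivity) ?_ (by norm_num))
  exact mul_le_mul (by linarith) hK hk (by linarith)

end InH1

theorem potential_le {p : ℝ} (hp : 1 ≤ p) {f : ℝ → ℂ} (hf : InH1 f) {M K : ℝ}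
    (hM : massSq f ≤ M) (hK : kinetic f ≤ K) :
    potential p f ≤ (4 * M * K) ^ ((p - 1) / 4) * M := by
  have hM0 : 0 ≤ M := (massSq_nonneg f).trans hM
  have hK0 : 0 ≤ K := (kinetic_nonneg f).trans hK
  have hMK : 0 ≤ 4 * M * K := by positivity
  have hpt : ∀ x, ‖f x‖ ^ (p + 1) ≤ (4 * M * K) ^ ((p - 1) / 4) * ‖f x‖ ^ 2 := fun x => by
    have hsplit : ‖f x‖ ^ (p + 1) = ‖f x‖ ^ (p - 1) * ‖f x‖ ^ 2 := by
      rw [← Real.rpow_natCast, ← Real.rpow_add' (norm_nonneg _) (by norm_num; linarith)]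
      norm_num [sub_add]
    have hsup : ‖f x‖ ^ (p - 1) ≤ (4 * M * K) ^ ((p - 1) / 4) := by
      calc ‖f x‖ ^ (p - 1) ≤ ((4 * M * K) ^ (1 / 4 : ℝ)) ^ (p - 1) :=
            Real.rpow_le_rpow (norm_nonneg _) (hf.norm_le_of_le hM hK x) (by linarith)
        _ = (4 * M * K) ^ ((p - 1) / 4) := by rw [← Real.rpow_mul hMK]; ring_nf
    rw [hsplit]
    gcongr
  calc potential p f ≤ ∫ x, (4 * M * K) ^ ((p - 1) / 4) * ‖f x‖ ^ 2 :=
        integral_mono_of_nonneg (ae_of_all _ fun _ => by positivity)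
          (hf.integrable_norm_sq.const_mul _) (ae_of_all _ hpt)
    _ = (4 * M * K) ^ ((p - 1) / 4) * massSq f := integral_const_mul _ _
    _ ≤ (4 * M * K) ^ ((p - 1) / 4) * M := by gcongr

noncomputable def tripleNormInt (u1 u2 u3 : ℝ → ℂ) : ℝ := ∫ x, ‖u1 x‖ * ‖u2 x‖ * ‖u3 x‖

theorem tripleNormInt_nonneg (u1 u2 u3 : ℝ → ℂ) : 0 ≤ tripleNormInt u1 u2 u3 :=
  integral_nonneg fun _ => by positivity

theorem tripleNormInt_comm12 (u1 u2 u3 : ℝ → ℂ) :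
    tripleNormInt u1 u2 u3 = tripleNormInt u2 u1 u3 := by
  simp only [tripleNormInt, mul_comm ‖u1 _‖]

theorem tripleNormInt_comm13 (u1 u2 u3 : ℝ → ℂ) :
    tripleNormInt u1 u2 u3 = tripleNormInt u3 u2 u1 := by
  simp only [tripleNormInt, mul_comm _ ‖u3 _‖, mul_comm ‖u1 _‖, mul_assoc]

section TripleNormInt

variable {u1 u2 u3 : ℝ → ℂ}

theorem integrable_norm_mul_norm_mul_norm (h1 : InH1 u1) (h2 : InH1 u2) (h3 : InH1 u3) :
    Integrable (fun x => ‖u1 x‖ * ‖u2 x‖ * ‖u3 x‖) := by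
  refine ((integrable_norm_mul_norm h2.1 h3.1).const_mul
    ((4 * massSq u1 * kinetic u1) ^ (1 / 4 : ℝ))).mono'
    (by have := h1.2.1.continuous; have := h2.2.1.continuous; have := h3.2.1.continuous
        fun_prop) (ae_of_all _ fun x => ?_)
  rw [Real.norm_of_nonneg (by positivity), mul_assoc]
  gcongr
  exact h1.norm_le x

theorem tripleNormInt_le (h1 : InH1 u1) (h2 : InH1 u2) (h3 : InH1 u3) :
    tripleNormInt u1 u2 u3 ≤
      (4 * massSq u1 * kinetic u1) ^ (1 / 4 : ℝ) * (√(massSq u2) * √(massSq u3)) := by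
  calc tripleNormInt u1 u2 u3
      ≤ ∫ x, (4 * massSq u1 * kinetic u1) ^ (1 / 4 : ℝ) * (‖u2 x‖ * ‖u3 x‖) :=
        integral_mono_of_nonneg (ae_of_all _ fun _ => by positivity)
          ((integrable_norm_mul_norm h2.1 h3.1).const_mul _)
          (ae_of_all _ fun x => by
            dsimp only
            rw [mul_assoc (‖u1 x‖)]
            exact mul_le_mul_of_nonneg_right (h1.norm_le x) (by positivity))
    _ ≤ _ := by
        have := massSq_nonneg u1
        have := kinetic_nonneg u1
        rw [integral_const_mul]
        exact mul_le_mul_of_nonneg_left (integral_norm_mul_norm_le h2.1 h3.1) (by positivity)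

theorem abs_interaction_le (h1 : InH1 u1) (h2 : InH1 u2) (h3 : InH1 u3) :
    |interaction u1 u2 u3| ≤ tripleNormInt u1 u2 u3 := by
  refine (abs_integral_le_integral_abs).trans (integral_mono_of_nonneg
    (ae_of_all _ fun _ => abs_nonneg _) (integrable_norm_mul_norm_mul_norm h1 h2 h3)
    (ae_of_all _ fun x => ?_))
  calc |(u1 x * u2 x * (starRingEnd ℂ) (u3 x)).re|
      ≤ ‖u1 x * u2 x * (starRingEnd ℂ) (u3 x)‖ := Complex.abs_re_le_norm _
    _ = ‖u1 x‖ * ‖u2 x‖ * ‖u3 x‖ := by simp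

end TripleNormInt

noncomputable def singleEnergy (p β : ℝ) (f : ℝ → ℂ) : ℝ :=
  1 / 2 * kinetic f - β / (p + 1) * potential p f

section Energy

variable {p α β : ℝ} {u1 u2 u3 : ℝ → ℂ}

theorem energy_le_singleEnergy_add (hα : 0 ≤ α) (h1 : InH1 u1) (h2 : InH1 u2)
    (h3 : InH1 u3) :
    energy p α β u1 u2 u3 ≤ singleEnergy p β u1 + singleEnergy p β u2 + singleEnergy p β u3
      + α * tripleNormInt u1 u2 u3 := by
  have := mul_le_mul_of_nonneg_left (abs_le.1 (abs_interaction_le h1 h2 h3)).1 hα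
  simp only [energy, singleEnergy]
  linarith

theorem singleEnergy_add_sub_le_energy (hα : 0 ≤ α) (h1 : InH1 u1) (h2 : InH1 u2)
    (h3 : InH1 u3) :
    singleEnergy p β u1 + singleEnergy p β u2 + singleEnergy p β u3
      - α * tripleNormInt u1 u2 u3 ≤ energy p α β u1 u2 u3 := by
  have := mul_le_mul_of_nonneg_left (abs_le.1 (abs_interaction_le h1 h2 h3)).2 hα
  simp only [energy, singleEnergy]
  linarith

end Energy

theorem exists_mul_rpow_le_add (a : ℝ) {θ : ℝ} (hθ0 : 0 ≤ θ) (hθ1 : θ < 1) {ε : ℝ}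
    (hε : 0 < ε) : ∃ C, ∀ t, 0 ≤ t → a * t ^ θ ≤ ε * t + C := by
  have hlim : Tendsto (fun t : ℝ => a * t ^ (θ - 1)) atTop (𝓝 0) := by
    simpa [neg_sub] using (tendsto_rpow_neg_atTop (sub_pos.2 hθ1)).const_mul a
  obtain ⟨T, hT⟩ := eventually_atTop.1 (hlim.eventually (eventually_le_nhds hε))
  set T' := max T 1
  refine ⟨|a| * T' ^ θ, fun t ht => ?_⟩
  rcases le_total t T' with htT | htT
  · have : a * t ^ θ ≤ |a| * T' ^ θ :=
      (mul_le_mul_of_nonneg_right (le_abs_self a) (by positivity)).trans (by gcongr)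
    linarith [mul_nonneg hε.le ht]
  · have ht0 : 0 < t := lt_of_lt_of_le one_pos ((le_max_right _ _).trans htT)
    have hsplit : a * t ^ θ = a * t ^ (θ - 1) * t := by
      rw [mul_assoc, ← Real.rpow_add_one ht0.ne']; ring_nf
    have := mul_le_mul_of_nonneg_right (hT t ((le_max_left _ _).trans htT)) ht0.le
    have : 0 ≤ |a| * T' ^ θ := by positivity
    linarith

theorem exists_sum_kinetic_sub_le_energy {p α β : ℝ} (hp : 1 < p) (hp5 : p < 5) (hα : 0 ≤ α)
    (hβ : 0 ≤ β) (M : ℝ) :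
    ∃ C, ∀ u1 u2 u3 : ℝ → ℂ, InH1 u1 → InH1 u2 → InH1 u3 → massSq u1 ≤ M → massSq u2 ≤ M →
      massSq u3 ≤ M →
      (kinetic u1 + kinetic u2 + kinetic u3) / 4 - C ≤ energy p α β u1 u2 u3 := by
  obtain ⟨C1, hC1⟩ := exists_mul_rpow_le_add (3 * (β / (p + 1)) * ((4 * M) ^ ((p - 1) / 4) * M))
    (by linarith : 0 ≤ (p - 1) / 4) (by linarith) (by norm_num : (0 : ℝ) < 1 / 8)
  obtain ⟨C2, hC2⟩ := exists_mul_rpow_le_add (α * ((4 * M) ^ (1 / 4 : ℝ) * M))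
    (θ := 1 / 4) (by norm_num) (by norm_num) (by norm_num : (0 : ℝ) < 1 / 8)
  refine ⟨C1 + C2, fun u1 u2 u3 h1 h2 h3 hM1 hM2 hM3 => ?_⟩
  set K := kinetic u1 + kinetic u2 + kinetic u3 with hKdef
  have hk1 := kinetic_nonneg u1
  have hk2 := kinetic_nonneg u2
  have hk3 := kinetic_nonneg u3
  have hM : 0 ≤ M := (massSq_nonneg u1).trans hM1
  have hK : 0 ≤ K := by positivity
  have hpot : ∀ f, InH1 f → massSq f ≤ M → kinetic f ≤ K →
      potential p f ≤ (4 * M) ^ ((p - 1) / 4) * M * K ^ ((p - 1) / 4) := fun f hf hMf hKf => by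
    have := potential_le hp.le hf hMf hKf
    rwa [Real.mul_rpow (by positivity) hK, mul_right_comm] at this
  have htriple : tripleNormInt u1 u2 u3 ≤ (4 * M) ^ (1 / 4 : ℝ) * M * K ^ (1 / 4 : ℝ) := by
    have hsqrt : √(massSq u2) * √(massSq u3) ≤ M := by
      calc √(massSq u2) * √(massSq u3) ≤ √M * √M := by gcongr
        _ = M := Real.mul_self_sqrt hM
    have hm1 := massSq_nonneg u1
    calc tripleNormInt u1 u2 u3
        ≤ (4 * massSq u1 * kinetic u1) ^ (1 / 4 : ℝ) * (√(massSq u2) * √(massSq u3)) :=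
          tripleNormInt_le h1 h2 h3
      _ ≤ (4 * M * K) ^ (1 / 4 : ℝ) * M :=
          mul_le_mul (Real.rpow_le_rpow (by positivity)
            (mul_le_mul (by linarith) (by linarith) hk1 (by linarith)) (by norm_num))
            hsqrt (by positivity) (by positivity)
      _ = (4 * M) ^ (1 / 4 : ℝ) * M * K ^ (1 / 4 : ℝ) := by
          rw [Real.mul_rpow (by positivity) hK]; ring
  have hpotsum : β / (p + 1) * (potential p u1 + potential p u2 + potential p u3)
      ≤ 1 / 8 * K + C1 :=
    (mul_le_mul_of_nonneg_left (add_le_add (add_le_add (hpot u1 h1 hM1 (by linarith))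
      (hpot u2 h2 hM2 (by linarith))) (hpot u3 h3 hM3 (by linarith))) (by positivity)).trans
      (le_of_eq_of_le (by ring) (hC1 K hK))
  have htriplesum : α * tripleNormInt u1 u2 u3 ≤ 1 / 8 * K + C2 :=
    (mul_le_mul_of_nonneg_left htriple hα).trans (le_of_eq_of_le (by ring) (hC2 K hK))
  have hsum := singleEnergy_add_sub_le_energy (p := p) (β := β) hα h1 h2 h3
  simp only [singleEnergy] at hsum
  linarith

def IsDecoupledLowerBound (p α β J γA γB γC : ℝ) : Prop :=
  ∀ w vB vC : ℝ → ℂ, InH1 w → InH1 vB → InH1 vC → massSq w = γA → massSq vB = γB →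
    massSq vC = γC →
    J ≤ singleEnergy p β w + singleEnergy p β vB + singleEnergy p β vC
      + α * tripleNormInt w vB vC

namespace IsDecoupledLowerBound

variable {p α β J γA γB γC : ℝ}

theorem comm12 (h : IsDecoupledLowerBound p α β J γA γB γC) :
    IsDecoupledLowerBound p α β J γB γA γC := fun w vB vC hw hB hC hmw hmB hmC => by
  have := h vB w vC hB hw hC hmB hmw hmC
  rw [tripleNormInt_comm12] at this
  linarith

theorem comm13 (h : IsDecoupledLowerBound p α β J γA γB γC) :
    IsDecoupledLowerBound p α β J γC γB γA := fun w vB vC hw hB hC hmw hmB hmC => by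
  have := h vC vB w hC hB hw hmC hmB hmw
  rw [tripleNormInt_comm13] at this
  linarith

end IsDecoupledLowerBound

section Infimum

variable {p α β γ μ s : ℝ}

theorem bddBelow_constraintSet (hp : 1 < p) (hp5 : p < 5) (hα : 0 ≤ α) (hβ : 0 ≤ β) :
    BddBelow (constraintSet p α β γ μ s) := by
  obtain ⟨C, hC⟩ := exists_sum_kinetic_sub_le_energy hp hp5 hα hβ (max γ (max μ s))
  refine ⟨-C, ?_⟩
  rintro _ ⟨u1, u2, u3, h1, h2, h3, rfl, rfl, rfl, rfl⟩
  have := hC u1 u2 u3 h1 h2 h3 (by simp) (by simp) (by simp)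
  linarith [kinetic_nonneg u1, kinetic_nonneg u2, kinetic_nonneg u3]

theorem isDecoupledLowerBound_Iinf (hp : 1 < p) (hp5 : p < 5) (hα : 0 ≤ α) (hβ : 0 ≤ β) :
    IsDecoupledLowerBound p α β (Iinf p α β γ μ s) γ μ s :=
  fun v1 v2 v3 h1 h2 h3 hm1 hm2 hm3 => (csInf_le (bddBelow_constraintSet hp hp5 hα hβ)
    ⟨v1, v2, v3, h1, h2, h3, hm1, hm2, hm3, rfl⟩).trans (energy_le_singleEnergy_add hα h1 h2 h3)

end Infimum

theorem MinimizingSeq.exists_sum_kinetic_le {p α β γ μ s : ℝ} {u1 u2 u3 : ℕ → ℝ → ℂ}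
    (hmin : MinimizingSeq p α β γ μ s u1 u2 u3) (hp : 1 < p) (hp5 : p < 5) (hα : 0 ≤ α)
    (hβ : 0 ≤ β) :
    ∃ B > (0 : ℝ), ∀ᶠ n in atTop, kinetic (u1 n) + kinetic (u2 n) + kinetic (u3 n) ≤ B := by
  obtain ⟨hH1, hm1, hm2, hm3, hE⟩ := hmin
  set M := |γ| + |μ| + |s| + 1
  obtain ⟨C, hC⟩ := exists_sum_kinetic_sub_le_energy hp hp5 hα hβ M
  refine ⟨max 1 (4 * (Iinf p α β γ μ s + 1 + C)), by positivity, ?_⟩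
  have := le_abs_self γ; have := le_abs_self μ; have := le_abs_self s
  have := abs_nonneg γ; have := abs_nonneg μ; have := abs_nonneg s
  have hγ : γ < M := by linarith
  have hμ : μ < M := by linarith
  have hs : s < M := by linarith
  filter_upwards [hm1.eventually (eventually_le_nhds hγ), hm2.eventually (eventually_le_nhds hμ),
    hm3.eventually (eventually_le_nhds hs),
    hE.eventually (eventually_le_nhds (lt_add_one _))] with n h1 h2 h3 hEn
  have := hC _ _ _ (hH1 n).1 (hH1 n).2.1 (hH1 n).2.2 h1 h2 h3
  exact le_max_of_le_right (by linarith)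

section Translation

variable {f : ℝ → ℂ} (R : ℝ)

theorem deriv_comp_sub_const' : deriv (fun x => f (x - R)) = fun x => deriv f (x - R) :=
  funext fun _ => deriv_comp_sub_const ..

theorem InH1.comp_sub_const (hf : InH1 f) : InH1 (fun x => f (x - R)) := by
  have hmp := measurePreserving_sub_right volume R
  refine ⟨hf.1.comp_measurePreserving hmp, fun x => (hf.2.1 _).comp x
    (differentiableAt_id.sub_const R), ?_⟩
  rw [deriv_comp_sub_const']
  exact hf.2.2.comp_measurePreserving hmp

theorem massSq_comp_sub_const : massSq (fun x => f (x - R)) = massSq f :=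
  integral_sub_right_eq_self (fun x => ‖f x‖ ^ 2) R

theorem singleEnergy_comp_sub_const (p β : ℝ) :
    singleEnergy p β (fun x => f (x - R)) = singleEnergy p β f := by
  simp only [singleEnergy, kinetic, potential, deriv_comp_sub_const',
    integral_sub_right_eq_self (fun x => ‖deriv f x‖ ^ 2),
    integral_sub_right_eq_self (fun x => ‖f x‖ ^ (p + 1))]

end Translation

def rescale (c a : ℝ) (f : ℝ → ℂ) : ℝ → ℂ := fun x => c * f (a * x)

section Rescale

variable {f : ℝ → ℂ} (c : ℝ) {a : ℝ}

theorem deriv_rescale : deriv (rescale c a f) = fun x => (c * a : ℂ) * deriv f (a * x) := by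
  funext x
  unfold rescale
  rw [deriv_const_mul_field, deriv_comp_mul_left, Complex.real_smul]
  ring

theorem integral_comp_mul_left_of_pos {E : Type*} [NormedAddCommGroup E] [NormedSpace ℝ E]
    (g : ℝ → E) (ha : 0 < a) : ∫ x, g (a * x) = a⁻¹ • ∫ x, g x := by
  rw [Measure.integral_comp_mul_left, abs_of_pos (inv_pos.2 ha)]

theorem InH1.rescale (hf : InH1 f) (ha : 0 < a) : InH1 (rescale c a f) := by
  have hmemLp : ∀ g : ℝ → ℂ, Measurable g → MemLp g 2 → MemLp (fun x => g (a * x)) 2 :=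
    fun g hg hg2 => (memLp_two_iff_integrable_sq_norm
      (hg.comp (measurable_const_mul a)).aestronglyMeasurable).2
      ((memLp_two_iff_integrable_sq_norm hg.aestronglyMeasurable).1 hg2 |>.comp_mul_left' ha.ne')
  refine ⟨(hmemLp f hf.2.1.continuous.measurable hf.1).const_mul _, fun x => ?_, ?_⟩
  · exact ((hf.2.1 _).comp x (differentiableAt_id.const_mul a)).const_mul _
  · rw [deriv_rescale]
    exact (hmemLp _ (measurable_deriv f) hf.2.2).const_mul _

theorem massSq_rescale (ha : 0 < a) : massSq (rescale c a f) = c ^ 2 / a * massSq f := by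
  simp only [massSq, rescale, norm_mul, Complex.norm_real, Real.norm_eq_abs, mul_pow, sq_abs]
  rw [integral_const_mul, integral_comp_mul_left_of_pos (fun x => ‖f x‖ ^ 2) ha, smul_eq_mul]
  ring

theorem kinetic_rescale (ha : 0 < a) : kinetic (rescale c a f) = c ^ 2 * a * kinetic f := by
  simp only [kinetic, deriv_rescale, norm_mul, mul_pow, Complex.norm_real, Real.norm_eq_abs,
    sq_abs]
  rw [integral_const_mul, integral_comp_mul_left_of_pos (fun x => ‖deriv f x‖ ^ 2) ha,
    smul_eq_mul]
  field_simp

theorem potential_rescale (p : ℝ) (ha : 0 < a) :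
    potential p (rescale c a f) = |c| ^ (p + 1) / a * potential p f := by
  simp only [potential, rescale, norm_mul, Complex.norm_real, Real.norm_eq_abs]
  simp only [Real.mul_rpow (abs_nonneg c) (norm_nonneg _)]
  rw [integral_const_mul, integral_comp_mul_left_of_pos (fun x => ‖f x‖ ^ (p + 1)) ha,
    smul_eq_mul]
  ring

end Rescale

theorem singleEnergy_rescale {f : ℝ → ℂ} (p β c : ℝ) {a : ℝ} (ha : 0 < a) :
    singleEnergy p β (rescale c a f)
      = c ^ 2 * a / 2 * kinetic f - β / (p + 1) * (|c| ^ (p + 1) / a) * potential p f := by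
  rw [singleEnergy, kinetic_rescale c ha, potential_rescale c p ha]
  ring

theorem tendsto_rescale_atBot {f : ℝ → ℂ} (c : ℝ) {a : ℝ} (ha : 0 < a)
    (hf : Tendsto f atBot (𝓝 0)) : Tendsto (rescale c a f) atBot (𝓝 0) := by
  have := (hf.comp (tendsto_id.const_mul_atBot ha)).const_mul (c : ℂ)
  rw [mul_zero] at this
  exact this

noncomputable def gaussianProfile : ℝ → ℂ := fun x => (Real.exp (-x ^ 2) : ℂ)

theorem hasDerivAt_gaussianProfile (x : ℝ) :
    HasDerivAt gaussianProfile ((-2 * x * Real.exp (-x ^ 2) : ℝ) : ℂ) x :=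
  (hasDerivAt_pow 2 x).neg.exp.ofReal_comp.congr_deriv (by simp; ring)

theorem integral_norm_gaussianProfile_rpow (q : ℝ) :
    ∫ x, ‖gaussianProfile x‖ ^ q = √(Real.pi / q) := by
  simp only [gaussianProfile, Complex.norm_real, Real.norm_of_nonneg (Real.exp_pos _).le,
    ← Real.exp_mul]
  rw [← integral_gaussian q]
  congr 1 with x
  ring_nf

theorem inH1_gaussianProfile : InH1 gaussianProfile := by
  have hderiv : deriv gaussianProfile = fun x => ((-2 * x * Real.exp (-x ^ 2) : ℝ) : ℂ) :=
    funext fun x => (hasDerivAt_gaussianProfile x).deriv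
  have hcont : Continuous gaussianProfile := by unfold gaussianProfile; fun_prop
  refine ⟨?_, fun x => (hasDerivAt_gaussianProfile x).differentiableAt, ?_⟩
  · rw [memLp_two_iff_integrable_sq_norm hcont.aestronglyMeasurable]
    refine (integrable_exp_neg_mul_sq (by norm_num : (0 : ℝ) < 2)).congr (ae_of_all _ fun x => ?_)
    simp only [gaussianProfile, Complex.norm_real, Real.norm_of_nonneg (Real.exp_pos _).le,
      ← Real.exp_nat_mul]
    ring_nf
  · rw [hderiv, memLp_two_iff_integrable_sq_norm (by fun_prop)]
    refine ((integrable_rpow_mul_exp_neg_mul_sq (by norm_num : (0 : ℝ) < 2)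
      (by norm_num : (-1 : ℝ) < 2)).const_mul 4).congr (ae_of_all _ fun x => ?_)
    simp only [Complex.norm_real, Real.norm_eq_abs, sq_abs]
    rw [Real.rpow_two]
    ring_nf
    rw [← Real.exp_nat_mul]
    ring_nf

theorem tendsto_gaussianProfile_atBot : Tendsto gaussianProfile atBot (𝓝 0) := by
  have : Tendsto (fun x : ℝ => Real.exp (-x ^ 2)) atBot (𝓝 0) :=
    Real.tendsto_exp_atBot.comp (tendsto_neg_atTop_atBot.comp
      (tendsto_pow_atTop two_ne_zero |>.comp tendsto_neg_atBot_atTop |>.congr fun x => by simp))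
  unfold gaussianProfile
  simpa [Function.comp_def] using (Complex.continuous_ofReal.tendsto 0).comp this

section Dilation

variable {f : ℝ → ℂ} {l : ℝ}

theorem massSq_rescale_sqrt (hl : 0 < l) : massSq (rescale √l l f) = massSq f := by
  rw [massSq_rescale _ hl, Real.sq_sqrt hl.le, div_self hl.ne', one_mul]

theorem singleEnergy_rescale_sqrt (p β : ℝ) (hl : 0 < l) :
    singleEnergy p β (rescale √l l f)
      = l ^ 2 / 2 * kinetic f - β / (p + 1) * l ^ ((p - 1) / 2) * potential p f := by
  have hpow : |√l| ^ (p + 1) / l = l ^ ((p - 1) / 2) := by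
    rw [abs_of_nonneg (Real.sqrt_nonneg l), Real.sqrt_eq_rpow, ← Real.rpow_mul hl.le,
      div_eq_iff hl.ne', ← Real.rpow_add_one hl.ne']
    ring_nf
  rw [singleEnergy_rescale _ _ _ hl, hpow, Real.sq_sqrt hl.le]
  ring

end Dilation

theorem exists_massSq_eq_singleEnergy_neg {p β : ℝ} (hp : 1 < p) (hp5 : p < 5) (hβ : 0 < β)
    {t : ℝ} (ht : 0 < t) :
    ∃ w, InH1 w ∧ massSq w = t ∧ Tendsto w atBot (𝓝 0) ∧ singleEnergy p β w < 0 := by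
  have hM : 0 < massSq gaussianProfile := by
    have := integral_norm_gaussianProfile_rpow 2
    simp only [Real.rpow_two] at this
    rw [massSq, this]
    positivity
  have hP : 0 < potential p gaussianProfile := by
    rw [potential, integral_norm_gaussianProfile_rpow]
    exact Real.sqrt_pos.2 (by positivity)
  set c := √(t / massSq gaussianProfile)
  have hc : 0 < c := Real.sqrt_pos.2 (by positivity)
  set f := rescale c 1 gaussianProfile
  have hf : InH1 f := inH1_gaussianProfile.rescale c one_pos
  have hfm : massSq f = t := by
    rw [massSq_rescale c one_pos, Real.sq_sqrt (by positivity)]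
    field_simp
  have hfP : 0 < potential p f := by
    rw [potential_rescale c p one_pos]
    positivity
  -- `l ^ 2 = l ^ ((p - 1) / 2) * l ^ ((5 - p) / 2)`, and the second factor is small near `0`.
  have hsmall : Tendsto (fun l : ℝ => l ^ ((5 - p) / 2) * (kinetic f / 2)) (𝓝[>] 0) (𝓝 0) := by
    have := ((Real.continuousAt_rpow_const 0 ((5 - p) / 2) (Or.inr (by linarith))).tendsto.mul_const
      (kinetic f / 2)).mono_left (nhdsWithin_le_nhds (s := Set.Ioi 0))
    rwa [Real.zero_rpow (by linarith), zero_mul] at this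
  obtain ⟨l, hlt, hl : 0 < l⟩ := ((hsmall.eventually (gt_mem_nhds
    (by positivity : 0 < β / (p + 1) * potential p f))).and self_mem_nhdsWithin).exists
  refine ⟨rescale √l l f, hf.rescale _ hl, by rw [massSq_rescale_sqrt hl, hfm],
    tendsto_rescale_atBot _ hl (tendsto_rescale_atBot c one_pos tendsto_gaussianProfile_atBot), ?_⟩
  have hsplit : l ^ 2 = l ^ ((p - 1) / 2) * l ^ ((5 - p) / 2) := by
    rw [← Real.rpow_add hl, ← Real.rpow_natCast]; ring_nf
  rw [singleEnergy_rescale_sqrt p β hl, hsplit]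
  have := mul_lt_mul_of_pos_left hlt (Real.rpow_pos_of_pos hl ((p - 1) / 2))
  linarith

theorem tendsto_tripleNormInt_comp_sub_const {w v2 v3 : ℝ → ℂ} (hw : InH1 w)
    (hw0 : Tendsto w atBot (𝓝 0)) (h2 : InH1 v2) (h3 : InH1 v3) :
    Tendsto (fun R => tripleNormInt (fun x => w (x - R)) v2 v3) atTop (𝓝 0) := by
  have hlim : ∀ x, Tendsto (fun R => ‖w (x - R)‖ * ‖v2 x‖ * ‖v3 x‖) atTop (𝓝 0) := fun x => by
    have hx : Tendsto (fun R : ℝ => x - R) atTop atBot := by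
      simpa [sub_eq_add_neg] using tendsto_atBot_add_const_left atTop x tendsto_neg_atTop_atBot
    simpa using ((hw0.comp hx).norm.mul_const ‖v2 x‖).mul_const ‖v3 x‖
  simpa [tripleNormInt] using tendsto_integral_filter_of_dominated_convergence
    (fun x => (4 * massSq w * kinetic w) ^ (1 / 4 : ℝ) * (‖v2 x‖ * ‖v3 x‖))
    (Eventually.of_forall fun R => (integrable_norm_mul_norm_mul_norm (hw.comp_sub_const R) h2
      h3).aestronglyMeasurable)
    (Eventually.of_forall fun R => ae_of_all _ fun x => by
      rw [Real.norm_of_nonneg (by positivity), mul_assoc]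
      exact mul_le_mul_of_nonneg_right (hw.norm_le _) (by positivity))
    ((integrable_norm_mul_norm h2.1 h3.1).const_mul _) (ae_of_all _ hlim)

section Vanishing

variable {ι : Type*} {l : Filter ι}

theorem tendsto_potential_zero {p : ℝ} (hp : 1 < p) {f : ι → ℝ → ℂ} (hf : ∀ i, InH1 (f i))
    {M : ℝ} (hM : ∀ᶠ i in l, massSq (f i) ≤ M)
    (hMK : Tendsto (fun i => massSq (f i) * kinetic (f i)) l (𝓝 0)) :
    Tendsto (fun i => potential p (f i)) l (𝓝 0) := by
  have hlim : Tendsto (fun i => (4 * (massSq (f i) * kinetic (f i))) ^ ((p - 1) / 4) * M) l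
      (𝓝 0) := by
    have hθ : 0 < (p - 1) / 4 := by linarith
    have h := ((hMK.const_mul 4).rpow_const (Or.inr hθ.le)).mul_const M
    rwa [mul_zero, Real.zero_rpow hθ.ne', zero_mul] at h
  refine squeeze_zero' (Eventually.of_forall fun i => potential_nonneg p (f i)) ?_ hlim
  filter_upwards [hM] with i hi
  have := massSq_nonneg (f i)
  have := kinetic_nonneg (f i)
  calc potential p (f i) ≤ (4 * massSq (f i) * kinetic (f i)) ^ ((p - 1) / 4) * massSq (f i) :=
        potential_le hp.le (hf i) le_rfl le_rfl
    _ ≤ _ := by rw [mul_assoc 4]; gcongr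

theorem tendsto_tripleNormInt_zero {u1 u2 u3 : ι → ℝ → ℂ} (h1 : ∀ i, InH1 (u1 i))
    (h2 : ∀ i, InH1 (u2 i)) (h3 : ∀ i, InH1 (u3 i))
    (hMK : Tendsto (fun i => massSq (u1 i) * kinetic (u1 i)) l (𝓝 0)) {M2 M3 : ℝ}
    (hM2 : ∀ᶠ i in l, massSq (u2 i) ≤ M2) (hM3 : ∀ᶠ i in l, massSq (u3 i) ≤ M3) :
    Tendsto (fun i => tripleNormInt (u1 i) (u2 i) (u3 i)) l (𝓝 0) := by
  have hlim : Tendsto (fun i => (4 * (massSq (u1 i) * kinetic (u1 i))) ^ (1 / 4 : ℝ)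
      * (√M2 * √M3)) l (𝓝 0) := by
    have h := ((hMK.const_mul 4).rpow_const (Or.inr (by norm_num : (0 : ℝ) ≤ 1 / 4))).mul_const
      (√M2 * √M3)
    rwa [mul_zero, Real.zero_rpow (by norm_num), zero_mul] at h
  refine squeeze_zero' (Eventually.of_forall fun i => tripleNormInt_nonneg _ _ _) ?_ hlim
  filter_upwards [hM2, hM3] with i hi2 hi3
  have := massSq_nonneg (u1 i)
  have := kinetic_nonneg (u1 i)
  calc tripleNormInt (u1 i) (u2 i) (u3 i)
      ≤ (4 * massSq (u1 i) * kinetic (u1 i)) ^ (1 / 4 : ℝ)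
          * (√(massSq (u2 i)) * √(massSq (u3 i))) := tripleNormInt_le (h1 i) (h2 i) (h3 i)
    _ ≤ _ := by rw [mul_assoc 4]; gcongr

end Vanishing

theorem exists_pos_add_le_singleEnergy_add {p α β J γA γB γC : ℝ} (hp : 1 < p) (hp5 : p < 5)
    (hβ : 0 < β) (hγA : 0 < γA)
    (hJ : IsDecoupledLowerBound p α β J γA γB γC) :
    ∃ η > 0, ∀ vB vC : ℝ → ℂ, InH1 vB → InH1 vC → massSq vB = γB → massSq vC = γC →
      J + η ≤ singleEnergy p β vB + singleEnergy p β vC := by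
  obtain ⟨w, hw, hwm, hw0, hneg⟩ := exists_massSq_eq_singleEnergy_neg hp hp5 hβ hγA
  refine ⟨-singleEnergy p β w, neg_pos.2 hneg, fun vB vC hB hC hmB hmC => ?_⟩
  -- Compete with the triple in which a negative-energy bump is translated far to the right.
  have hlim : Tendsto (fun R => singleEnergy p β w + singleEnergy p β vB + singleEnergy p β vC
      + α * tripleNormInt (fun x => w (x - R)) vB vC) atTop
      (𝓝 (singleEnergy p β w + singleEnergy p β vB + singleEnergy p β vC)) := by
    simpa using tendsto_const_nhds.add
      ((tendsto_tripleNormInt_comp_sub_const hw hw0 hB hC).const_mul α)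
  have := ge_of_tendsto' hlim fun R => by
    simpa only [singleEnergy_comp_sub_const] using hJ _ vB vC (hw.comp_sub_const R) hB hC
      (by rw [massSq_comp_sub_const, hwm]) hmB hmC
  linarith

theorem massSq_rescale_sqrt_one {f : ℝ → ℂ} {r : ℝ} (hr : 0 ≤ r) :
    massSq (rescale √r 1 f) = r * massSq f := by
  rw [massSq_rescale _ one_pos, Real.sq_sqrt hr, div_one]

theorem singleEnergy_rescale_sqrt_one {f : ℝ → ℂ} (p β : ℝ) {r : ℝ} (hr : 0 ≤ r) :
    singleEnergy p β (rescale √r 1 f)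
      = r / 2 * kinetic f - β / (p + 1) * r ^ ((p + 1) / 2) * potential p f := by
  rw [singleEnergy_rescale _ _ _ one_pos, abs_of_nonneg (Real.sqrt_nonneg r), Real.sq_sqrt hr,
    Real.sqrt_eq_rpow, ← Real.rpow_mul hr]
  ring_nf

theorem eventually_exists_massSq_eq_singleEnergy_le {ι : Type*} {l : Filter ι} [l.NeBot] {p β : ℝ}
    (hp : 1 < p) (hβ : 0 ≤ β) {V : ι → ℝ → ℂ} (hV : ∀ i, InH1 (V i)) {t : ℝ}
    (hm : Tendsto (fun i => massSq (V i)) l (𝓝 t)) {K : ℝ}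
    (hK : ∀ᶠ i in l, kinetic (V i) ≤ K) {ζ : ℝ} (hζ : 0 < ζ) :
    ∀ᶠ i in l, ∃ v, InH1 v ∧ massSq v = t ∧ singleEnergy p β v ≤ singleEnergy p β (V i) + ζ := by
  rcases (ge_of_tendsto' hm fun i => massSq_nonneg (V i)).eq_or_lt with rfl | ht
  · have hMK : Tendsto (fun i => massSq (V i) * kinetic (V i)) l (𝓝 0) := by
      refine squeeze_zero' (Eventually.of_forall fun i =>
        mul_nonneg (massSq_nonneg _) (kinetic_nonneg _)) ?_ (by simpa using hm.mul_const K)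
      filter_upwards [hK] with i hi
      exact mul_le_mul_of_nonneg_left hi (massSq_nonneg _)
    have hP := ((tendsto_potential_zero hp hV (hm.eventually (eventually_le_nhds one_pos))
      hMK).const_mul (β / (p + 1))).eventually (eventually_lt_nhds (by simpa using hζ))
    filter_upwards [hP] with i hi
    -- `rescale √0 1 (V i)` is the zero function.
    refine ⟨rescale √0 1 (V i), (hV i).rescale _ one_pos,
      by rw [massSq_rescale_sqrt_one le_rfl, zero_mul], ?_⟩
    rw [singleEnergy_rescale_sqrt_one p β le_rfl, singleEnergy,
      Real.zero_rpow (by linarith : (p + 1) / 2 ≠ 0)]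
    linarith [kinetic_nonneg (V i)]
  · set P := (4 * (t + 1) * K) ^ ((p - 1) / 4) * (t + 1)
    have hr : Tendsto (fun i => t / massSq (V i)) l (𝓝 1) := by
      have h := (tendsto_const_nhds (x := t)).div hm ht.ne'
      rwa [div_self ht.ne'] at h
    have hbound : Tendsto (fun i => |t / massSq (V i) - 1| / 2 * K
        + β / (p + 1) * |(t / massSq (V i)) ^ ((p + 1) / 2) - 1| * P) l (𝓝 0) := by
      have h := (((hr.sub_const 1).abs.div_const 2).mul_const K).add
        ((((hr.rpow_const (p := (p + 1) / 2) (Or.inl one_ne_zero)).sub_const 1).abs.const_mul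
          (β / (p + 1))).mul_const P)
      simpa using h
    filter_upwards [hbound.eventually (eventually_le_nhds hζ), hK,
      hm.eventually (eventually_gt_nhds ht), hm.eventually (eventually_le_nhds (lt_add_one t))]
      with i hi hKi hmi hMi
    have hr0 : 0 ≤ t / massSq (V i) := by positivity
    refine ⟨rescale √(t / massSq (V i)) 1 (V i), (hV i).rescale _ one_pos,
      by rw [massSq_rescale_sqrt_one hr0, div_mul_cancel₀ _ hmi.ne'], ?_⟩
    have hPi : potential p (V i) ≤ P := potential_le hp.le (hV i) hMi hKi
    have hk := kinetic_nonneg (V i)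
    have hpot := potential_nonneg p (V i)
    have e1 : (t / massSq (V i) - 1) / 2 * kinetic (V i) ≤ |t / massSq (V i) - 1| / 2 * K :=
      mul_le_mul (by gcongr; exact le_abs_self _) hKi hk (by positivity)
    have e2 : β / (p + 1) * (1 - (t / massSq (V i)) ^ ((p + 1) / 2)) * potential p (V i)
        ≤ β / (p + 1) * |(t / massSq (V i)) ^ ((p + 1) / 2) - 1| * P :=
      mul_le_mul (by gcongr; rw [abs_sub_comm]; exact le_abs_self _) hPi hpot (by positivity)
    rw [singleEnergy_rescale_sqrt_one p β hr0, singleEnergy]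
    linarith

section LowerBound

variable {p α β J γA γB γC : ℝ}

theorem not_tendsto_kinetic_zero {ι : Type*} {l : Filter ι} [l.NeBot] (hp : 1 < p)
    (hp5 : p < 5) (hβ : 0 < β) {A B C : ι → ℝ → ℂ} (hA : ∀ i, InH1 (A i))
    (hB : ∀ i, InH1 (B i)) (hC : ∀ i, InH1 (C i))
    (hmA : Tendsto (fun i => massSq (A i)) l (𝓝 γA)) (hγA : 0 < γA)
    (hmB : Tendsto (fun i => massSq (B i)) l (𝓝 γB))
    (hmC : Tendsto (fun i => massSq (C i)) l (𝓝 γC)) {K : ℝ}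
    (hKB : ∀ᶠ i in l, kinetic (B i) ≤ K) (hKC : ∀ᶠ i in l, kinetic (C i) ≤ K)
    (hJ : IsDecoupledLowerBound p α β J γA γB γC)
    {e : ι → ℝ} (he : Tendsto e l (𝓝 J))
    (hle : ∀ i, singleEnergy p β (A i) + singleEnergy p β (B i) + singleEnergy p β (C i)
      - α * tripleNormInt (A i) (B i) (C i) ≤ e i) :
    ¬ Tendsto (fun i => kinetic (A i)) l (𝓝 0) := by
  intro hK0
  obtain ⟨η, hη, hgap⟩ := exists_pos_add_le_singleEnergy_add hp hp5 hβ hγA hJ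
  have hMK : Tendsto (fun i => massSq (A i) * kinetic (A i)) l (𝓝 0) := by
    simpa using hmA.mul hK0
  have hpot := (tendsto_potential_zero hp hA (hmA.eventually (eventually_le_nhds
    (lt_add_one γA))) hMK).const_mul (β / (p + 1))
  have htriple := (tendsto_tripleNormInt_zero hA hB hC hMK
    (hmB.eventually (eventually_le_nhds (lt_add_one γB)))
    (hmC.eventually (eventually_le_nhds (lt_add_one γC)))).const_mul α
  rw [mul_zero] at hpot htriple
  have hζ : 0 < η / 5 := by positivity
  obtain ⟨i, ⟨vB, hvB, hmvB, hsB⟩, ⟨vC, hvC, hmvC, hsC⟩, hei, hPi, hTi⟩ :=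
    ((eventually_exists_massSq_eq_singleEnergy_le hp hβ.le hB hmB hKB hζ).and
      ((eventually_exists_massSq_eq_singleEnergy_le hp hβ.le hC hmC hKC hζ).and
      ((he.eventually (eventually_le_nhds (lt_add_of_pos_right J hζ))).and
      ((hpot.eventually (eventually_lt_nhds hζ)).and
      (htriple.eventually (eventually_lt_nhds hζ)))))).exists
  have hsA : -(η / 5) < singleEnergy p β (A i) := by
    rw [singleEnergy]
    linarith [kinetic_nonneg (A i)]
  linarith [hgap vB vC hvB hvC hmvB hmvC, hle i]

theorem exists_pos_eventually_le_sqrt_kinetic (hp : 1 < p) (hp5 : p < 5) (hβ : 0 < β)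
    {A B C : ℕ → ℝ → ℂ} (hA : ∀ n, InH1 (A n)) (hB : ∀ n, InH1 (B n)) (hC : ∀ n, InH1 (C n))
    (hmA : Tendsto (fun n => massSq (A n)) atTop (𝓝 γA)) (hγA : 0 < γA)
    (hmB : Tendsto (fun n => massSq (B n)) atTop (𝓝 γB))
    (hmC : Tendsto (fun n => massSq (C n)) atTop (𝓝 γC)) {K : ℝ}
    (hKB : ∀ᶠ n in atTop, kinetic (B n) ≤ K) (hKC : ∀ᶠ n in atTop, kinetic (C n) ≤ K)
    (hJ : IsDecoupledLowerBound p α β J γA γB γC)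
    {e : ℕ → ℝ} (he : Tendsto e atTop (𝓝 J))
    (hle : ∀ n, singleEnergy p β (A n) + singleEnergy p β (B n) + singleEnergy p β (C n)
      - α * tripleNormInt (A n) (B n) (C n) ≤ e n) :
    ∃ δ > (0 : ℝ), ∀ᶠ n in atTop, δ ≤ √(kinetic (A n)) := by
  by_contra! hsmall
  obtain ⟨φ, hφ, hφsmall⟩ := extraction_forall_of_frequently
    (P := fun k n => √(kinetic (A n)) < 1 / (k + 1)) fun k => hsmall _ (by positivity)
  have hsqrt : Tendsto (fun k => √(kinetic (A (φ k)))) atTop (𝓝 0) :=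
    squeeze_zero (fun _ => Real.sqrt_nonneg _) (fun k => (hφsmall k).le)
      tendsto_one_div_add_atTop_nhds_zero_nat
  have hK0 : Tendsto (fun n => kinetic (A n)) (map φ atTop) (𝓝 0) := by
    simpa [Function.comp_def, Real.sq_sqrt (kinetic_nonneg _)] using hsqrt.pow 2
  have hφ' := hφ.tendsto_atTop
  exact not_tendsto_kinetic_zero hp hp5 hβ hA hB hC (hmA.mono_left hφ') hγA
    (hmB.mono_left hφ') (hmC.mono_left hφ') (hφ' hKB) (hφ' hKC) hJ (he.mono_left hφ') hle hK0

end LowerBound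

theorem minimizing_sequence_gradient_bounds_general
    (p α β γ μ s : ℝ) (hp : 1 < p) (hp5 : p < 5) (hα : 0 < α) (hβ : 0 < β)
    (u1 u2 u3 : ℕ → ℝ → ℂ) (hmin : MinimizingSeq p α β γ μ s u1 u2 u3) :
    (∃ B > (0 : ℝ), ∀ᶠ n in Filter.atTop,
        kinetic (u1 n) + kinetic (u2 n) + kinetic (u3 n) ≤ B) ∧
    (0 < γ → ∃ δ₁ > (0 : ℝ), ∀ᶠ n in Filter.atTop,
        δ₁ ≤ Real.sqrt (kinetic (u1 n))) ∧
    (0 < μ → ∃ δ₂ > (0 : ℝ), ∀ᶠ n in Filter.atTop,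
        δ₂ ≤ Real.sqrt (kinetic (u2 n))) ∧
    (0 < s → ∃ δ₃ > (0 : ℝ), ∀ᶠ n in Filter.atTop,
        δ₃ ≤ Real.sqrt (kinetic (u3 n))) := by
  obtain ⟨B, hB, hbound⟩ := hmin.exists_sum_kinetic_le hp hp5 hα.le hβ.le
  obtain ⟨hH1, hm1, hm2, hm3, hE⟩ := hmin
  have h1 n := (hH1 n).1
  have h2 n := (hH1 n).2.1
  have h3 n := (hH1 n).2.2
  have hk n := And.intro (kinetic_nonneg (u1 n)) (And.intro (kinetic_nonneg (u2 n))
    (kinetic_nonneg (u3 n)))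
  have hK1 := hbound.mono fun n _ => (by linarith [hk n] : kinetic (u1 n) ≤ B)
  have hK2 := hbound.mono fun n _ => (by linarith [hk n] : kinetic (u2 n) ≤ B)
  have hK3 := hbound.mono fun n _ => (by linarith [hk n] : kinetic (u3 n) ≤ B)
  have hI := isDecoupledLowerBound_Iinf (γ := γ) (μ := μ) (s := s) hp hp5 hα.le hβ.le
  have hE' n := singleEnergy_add_sub_le_energy (p := p) (β := β) hα.le (h1 n) (h2 n) (h3 n)
  refine ⟨⟨B, hB, hbound⟩, fun hγ => ?_, fun hμ => ?_, fun hs => ?_⟩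
  · exact exists_pos_eventually_le_sqrt_kinetic hp hp5 hβ h1 h2 h3 hm1 hγ hm2 hm3 hK2 hK3 hI hE
      hE'
  · exact exists_pos_eventually_le_sqrt_kinetic hp hp5 hβ h2 h1 h3 hm2 hμ hm1 hm3 hK1 hK3
      hI.comm12 hE fun n => by
        linarith [hE' n, congrArg (α * ·) (tripleNormInt_comm12 (u1 n) (u2 n) (u3 n))]
  · exact exists_pos_eventually_le_sqrt_kinetic hp hp5 hβ h3 h2 h1 hm3 hs hm2 hm1 hK2 hK1
      hI.comm13 hE fun n => by
        linarith [hE' n, congrArg (α * ·) (tripleNormInt_comm13 (u1 n) (u2 n) (u3 n))]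

theorem minimizing_sequence_gradient_bounds
    (p α β γ μ s : ℝ) (hp : 1 < p) (hp5 : p < 5) (hα : 0 < α) (hβ : 0 < β)
    (hγ : 0 ≤ γ) (hμ : 0 ≤ μ) (hs : 0 ≤ s)
    (u1 u2 u3 : ℕ → ℝ → ℂ) (hmin : MinimizingSeq p α β γ μ s u1 u2 u3) :
    (∃ B > (0 : ℝ), ∀ᶠ n in Filter.atTop,
        kinetic (u1 n) + kinetic (u2 n) + kinetic (u3 n) ≤ B) ∧
    (0 < γ → ∃ δ₁ > (0 : ℝ), ∀ᶠ n in Filter.atTop,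
        δ₁ ≤ Real.sqrt (kinetic (u1 n))) ∧
    (0 < μ → ∃ δ₂ > (0 : ℝ), ∀ᶠ n in Filter.atTop,
        δ₂ ≤ Real.sqrt (kinetic (u2 n))) ∧
    (0 < s → ∃ δ₃ > (0 : ℝ), ∀ᶠ n in Filter.atTop,
        δ₃ ≤ Real.sqrt (kinetic (u3 n))) :=
  minimizing_sequence_gradient_bounds_general p α β γ μ s hp hp5 hα hβ u1 u2 u3 hmin
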